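/- Let V be a 6-dimensional complex vector space and let Λ ≠ Λ' be 3-dimensional subspaces of V with dim(Λ ∩ Λ') = 1, with Plücker vectors u and u' in ⋀³V. Then for any nonzero scalars a, b ∈ ℂ, the element ω = a·u + b·u' is not decomposable, the kernel of the map ∧ω : V → ⋀⁴V, v ↦ v∧ω, equals the line Λ ∩ Λ' (so ω ∈ O₅ with α_ω = Λ ∩ Λ'), and the associated hyperplane A_ω equals the 5-dimensional subspace Λ + Λ'. -/

import Mathlib

open ExteriorAlgebra

/-- `u` is a Plücker vector of the `m`-dimensional subspace `Λ`. -/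
def IsPluckerVector {V : Type*} [AddCommGroup V] [Module ℂ V] (m : ℕ)
    (Λ : Submodule ℂ V) (u : ExteriorAlgebra ℂ V) : Prop :=
  ∃ v : Fin m → V, Submodule.span ℂ (Set.range v) = Λ ∧ u = ιMulti ℂ m v

/-!
Let `t` span the line `Λ ∩ Λ'`. Exchanging `t` into the given spanning triples writes the Plücker
vectors as nonzero multiples of `t ∧ p ∧ q` and `t ∧ p' ∧ q'`; the five vectors `t, p, q, p', q'`
span the 5-dimensional `Λ + Λ'`, so they extend to a basis `e₀, …, e₅` of `V`, in which
`ω = A e₀∧e₁∧e₂ + B e₀∧e₃∧e₄` with `A, B ≠ 0`. Everything is then read off coordinates: pairing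
`v ∧ ω` with the 4-forms `e_s^*∧e₀^*∧e₁^*∧e₂^*` (`s = 3, 4, 5`) and `e_s^*∧e₀^*∧e₃^*∧e₄^*`
(`s = 1, 2`) shows that only multiples of `e₀` are killed; pairing `f ⌟ ω` with 2-forms shows
that `f` vanishes on `e₀, …, e₄`; and if `ω = x ∧ y ∧ z`, then `x` and `y` lie in the kernel line,
so `ω = 0`.
-/

open Submodule Function Module

theorem AlternatingMap.map_update_sum_smul {R M N ι : Type*} [CommSemiring R]
    [AddCommMonoid M] [Module R M] [AddCommMonoid N] [Module R N] [Fintype ι] [DecidableEq ι]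
    (f : M [⋀^ι]→ₗ[R] N) (v : ι → M) (c : ι → R) (i : ι) :
    f (update v i (∑ j, c j • v j)) = c i • f v := by
  rw [f.map_update_sum, Finset.sum_eq_single i, f.map_update_smul, update_eq_self]
  · intro j _ hji
    rw [f.map_update_smul, f.map_update_self v hji.symm, smul_zero]
  · simp

section CommRing

variable {R M : Type*} [CommRing R] [AddCommGroup M] [Module R M]

theorem ι_mul_ιMulti {n : ℕ} (x : M) (w : Fin n → M) :
    ι R x * ιMulti R n w = ιMulti R (n + 1) (Fin.cons x w) :=
  (ιMulti_succ_apply (Fin.cons x w)).symm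

theorem ιMulti_three (x y z : M) : ιMulti R 3 ![x, y, z] = ι R x * ι R y * ι R z := by
  simp [ιMulti_succ_apply, mul_assoc]

/-- Pairing with the `k`-form `g 0 ∧ ⋯ ∧ g (k - 1)`, extended by zero to the other degrees. -/
noncomputable def detPairing {k : ℕ} (g : Fin k → Dual R M) : ExteriorAlgebra R M →ₗ[R] R :=
  liftAlternating (Pi.single k (Matrix.detRowAlternating.compLinearMap (LinearMap.pi g)))

theorem detPairing_ιMulti {k : ℕ} (g : Fin k → Dual R M) (w : Fin k → M) :
    detPairing g (ιMulti R k w) = (Matrix.of fun i j => g j (w i)).det := by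
  simp [detPairing]
  rfl

theorem detPairing_ι_mul_ι (g : Fin 2 → Dual R M) (x y : M) :
    detPairing g (ι R x * ι R y) = g 0 x * g 1 y - g 1 x * g 0 y := by
  have : ι R x * ι R y = ιMulti R 2 ![x, y] := by simp [ιMulti_succ_apply]
  rw [this, detPairing_ιMulti, Matrix.det_fin_two]
  simp

end CommRing

section Field

variable {𝕜 V : Type*} [Field 𝕜] [AddCommGroup V] [Module 𝕜 V]

theorem span_range_update_sum_smul {ι : Type*} [Fintype ι] [DecidableEq ι] (v : ι → V)
    {c : ι → 𝕜} {i : ι} (hi : c i ≠ 0) :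
    span 𝕜 (Set.range (update v i (∑ j, c j • v j))) = span 𝕜 (Set.range v) := by
  set W := span 𝕜 (Set.range (update v i (∑ j, c j • v j)))
  have hmem : ∀ j, j ≠ i → v j ∈ W := fun j hj =>
    subset_span ⟨j, update_of_ne hj _ _⟩
  have hsum : ∑ j, c j • v j ∈ W := subset_span ⟨i, update_self ..⟩
  apply le_antisymm
  · rw [span_le, Set.range_subset_iff]
    intro j
    rcases eq_or_ne j i with rfl | hj
    · simpa using sum_mem fun k _ => smul_mem _ (c k) (subset_span (Set.mem_range_self k))
    · simpa [hj] using subset_span (Set.mem_range_self j)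
  · rw [span_le, Set.range_subset_iff]
    intro j
    rcases eq_or_ne j i with rfl | hj
    · rw [← Finset.add_sum_erase _ _ (Finset.mem_univ j)] at hsum
      have := (W.add_mem_iff_left (sum_mem fun k hk => smul_mem W _
        (hmem k (Finset.ne_of_mem_erase hk)))).1 hsum
      exact (smul_mem_iff W hi).1 this
    · exact hmem j hj

theorem exists_ιMulti_cons_eq_smul {n : ℕ} (v : Fin (n + 1) → V) {t : V}
    (ht : t ∈ span 𝕜 (Set.range v)) (ht0 : t ≠ 0) :
    ∃ w : Fin n → V, span 𝕜 (Set.range (Fin.cons t w : Fin (n + 1) → V)) = span 𝕜 (Set.range v) ∧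
      ∃ c : 𝕜, c ≠ 0 ∧ ιMulti 𝕜 (n + 1) (Fin.cons t w) = c • ιMulti 𝕜 (n + 1) v := by
  obtain ⟨c, rfl⟩ := (mem_span_range_iff_exists_fun 𝕜).1 ht
  obtain ⟨i, hi⟩ : ∃ i, c i ≠ 0 := by
    by_contra! h
    simp [h] at ht0
  -- replace `v i` by `t`, then swap it into position `0`
  set σ := Equiv.swap 0 i
  set u := update v i (∑ j, c j • v j) ∘ σ
  have hu : Fin.cons (∑ j, c j • v j) (Fin.tail u) = u := by
    conv_rhs => rw [← Fin.cons_self_tail u]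
    simp [u, σ]
  refine ⟨Fin.tail u, ?_, (Equiv.Perm.sign σ : 𝕜) * c i, ?_, ?_⟩
  · rw [hu, EquivLike.range_comp, span_range_update_sum_smul v hi]
  · exact mul_ne_zero (by rcases Int.units_eq_one_or (Equiv.Perm.sign σ) with h | h <;> simp [h]) hi
  · rw [hu, AlternatingMap.map_perm, AlternatingMap.map_update_sum_smul, Units.smul_def,
      ← Int.cast_smul_eq_zsmul 𝕜, smul_smul]

theorem exists_basis_castSucc_eq [FiniteDimensional 𝕜 V] {n : ℕ} {e : Fin n → V}
    (he : LinearIndependent 𝕜 e) (hV : finrank 𝕜 V = n + 1) :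
    ∃ b : Basis (Fin (n + 1)) 𝕜 V, ∀ i, b (Fin.castSucc i) = e i := by
  obtain ⟨z, hz⟩ : ∃ z, z ∉ span 𝕜 (Set.range e) := by
    by_contra! h
    have := finrank_span_eq_card he
    rw [eq_top_iff'.2 h, finrank_top, hV] at this
    simp at this
  refine ⟨basisOfLinearIndependentOfCardEqFinrank (linearIndependent_finSnoc.2 ⟨he, hz⟩)
    (by simp [hV]), fun i => by simp⟩

theorem ker_eq_of_le_ker_of_finrank_add_one [FiniteDimensional 𝕜 V] {f : Dual 𝕜 V} (hf : f ≠ 0)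
    {W : Submodule 𝕜 V} (hW : W ≤ LinearMap.ker f) (hdim : finrank 𝕜 W + 1 = finrank 𝕜 V) :
    LinearMap.ker f = W :=
  (eq_of_le_of_finrank_eq hW (by have := f.finrank_ker_add_one_of_ne_zero hf; omega)).symm

theorem ι_mul_ιMulti_eq_zero_of_mem_span {n : ℕ} (w : Fin n → V) {x : V}
    (hx : x ∈ span 𝕜 (Set.range w)) : ι 𝕜 x * ιMulti 𝕜 n w = 0 := by
  rw [ι_mul_ιMulti]
  exact AlternatingMap.map_linearDependent _ _ fun h => (linearIndependent_finCons.1 h).2 hx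

theorem not_exists_eq_ι_mul_ι_mul_ι {ω : ExteriorAlgebra 𝕜 V} (hω : ω ≠ 0) {t : V}
    (h : ∀ v, ι 𝕜 v * ω = 0 → v ∈ 𝕜 ∙ t) : ¬ ∃ x y z : V, ω = ι 𝕜 x * ι 𝕜 y * ι 𝕜 z := by
  rintro ⟨x, y, z, rfl⟩
  have hker : ∀ i, ![x, y, z] i ∈ 𝕜 ∙ t := fun i => h _ <| by
    rw [← ιMulti_three]
    exact ι_mul_ιMulti_eq_zero_of_mem_span _ (subset_span (Set.mem_range_self i))
  obtain ⟨α, rfl⟩ := mem_span_singleton.1 (hker 0)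
  obtain ⟨β, rfl⟩ := mem_span_singleton.1 (hker 1)
  simp at hω

theorem exists_basis_adapted_to_planes [FiniteDimensional 𝕜 V] (hV : finrank 𝕜 V = 6)
    {Λ Λ' : Submodule 𝕜 V} (hsup : finrank 𝕜 ↥(Λ ⊔ Λ') = 5) (hint : finrank 𝕜 ↥(Λ ⊓ Λ') = 1)
    {v v' : Fin 3 → V} (hv : span 𝕜 (Set.range v) = Λ) (hv' : span 𝕜 (Set.range v') = Λ') :
    ∃ (b : Basis (Fin 6) 𝕜 V) (c c' : 𝕜), c ≠ 0 ∧ c' ≠ 0 ∧ Λ ⊓ Λ' = 𝕜 ∙ b 0 ∧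
      span 𝕜 (Set.range (b ∘ Fin.castSucc)) = Λ ⊔ Λ' ∧
      ιMulti 𝕜 3 v = c • ιMulti 𝕜 3 ![b 0, b 1, b 2] ∧
      ιMulti 𝕜 3 v' = c' • ιMulti 𝕜 3 ![b 0, b 3, b 4] := by
  obtain ⟨t, ht, ht0⟩ := (Λ ⊓ Λ').exists_mem_ne_zero_of_ne_bot fun h => by
    rw [h, finrank_bot] at hint; exact zero_ne_one hint
  obtain ⟨w, hw, c, hc, hwv⟩ := exists_ιMulti_cons_eq_smul v (hv ▸ ht.1) ht0
  obtain ⟨w', hw', c', hc', hwv'⟩ := exists_ιMulti_cons_eq_smul v' (hv' ▸ ht.2) ht0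
  set e : Fin 5 → V := ![t, w 0, w 1, w' 0, w' 1]
  have he : span 𝕜 (Set.range e) = Λ ⊔ Λ' := by
    rw [← hv, ← hv', ← hw, ← hw', ← span_union]
    congr 1
    ext x
    simp [e, Fin.exists_fin_succ]
    tauto
  have hli : LinearIndependent 𝕜 e :=
    linearIndependent_iff_card_eq_finrank_span.2 (by rw [Set.finrank, he, hsup]; simp)
  obtain ⟨b, hb⟩ := exists_basis_castSucc_eq hli (by rw [hV])
  have hb0 : b 0 = t := hb 0
  have hcons : (Fin.cons t w : Fin 3 → V) = ![b 0, b 1, b 2] := by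
    rw [hb0, show b 1 = w 0 from hb 1, show b 2 = w 1 from hb 2]
    ext i; fin_cases i <;> rfl
  have hcons' : (Fin.cons t w' : Fin 3 → V) = ![b 0, b 3, b 4] := by
    rw [hb0, show b 3 = w' 0 from hb 3, show b 4 = w' 1 from hb 4]
    ext i; fin_cases i <;> rfl
  refine ⟨b, c⁻¹, c'⁻¹, inv_ne_zero hc, inv_ne_zero hc', ?_, ?_, ?_, ?_⟩
  · rw [eq_span_singleton_of_mem_of_finrank_eq_one hint ht ht0, hb0]
  · rw [← he]
    exact congrArg _ (congrArg _ (funext hb))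
  · rw [← hcons, hwv, inv_smul_smul₀ hc]
  · rw [← hcons', hwv', inv_smul_smul₀ hc']

section TwoPlaneForm

variable (b : Basis (Fin 6) 𝕜 V) (A B : 𝕜)

noncomputable def twoPlaneForm : ExteriorAlgebra 𝕜 V :=
  A • ιMulti 𝕜 3 ![b 0, b 1, b 2] + B • ιMulti 𝕜 3 ![b 0, b 3, b 4]

variable {A B}

theorem ι_mul_twoPlaneForm_eq_zero_iff (hA : A ≠ 0) (hB : B ≠ 0) (v : V) :
    ι 𝕜 v * twoPlaneForm b A B = 0 ↔ v ∈ 𝕜 ∙ b 0 := by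
  refine ⟨fun h => ?_, fun hv => ?_⟩
  · have hcoeff : ∀ s : Fin 4 → Fin 6,
        A * detPairing (b.coord ∘ s) (ιMulti 𝕜 4 ![v, b 0, b 1, b 2]) +
          B * detPairing (b.coord ∘ s) (ιMulti 𝕜 4 ![v, b 0, b 3, b 4]) = 0 := fun s => by
      have := congrArg (detPairing (b.coord ∘ s)) h
      simp only [twoPlaneForm, mul_add, mul_smul_comm, ι_mul_ιMulti, map_add, map_smul,
        smul_eq_mul, map_zero] at this
      exact this
    have h1 := hcoeff ![1, 0, 3, 4]
    have h2 := hcoeff ![2, 0, 3, 4]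
    have h3 := hcoeff ![3, 0, 1, 2]
    have h4 := hcoeff ![4, 0, 1, 2]
    have h5 := hcoeff ![5, 0, 1, 2]
    simp only [detPairing_ιMulti] at h1 h2 h3 h4 h5
    simp [Matrix.det_succ_row_zero, Fin.sum_univ_succ, Finsupp.single_apply, Fin.succAbove, hA, hB]
      at h1 h2 h3 h4 h5
    rw [← b.sum_repr v, Fin.sum_univ_six, h1, h2, h3, h4, h5]
    simpa using smul_mem _ _ (mem_span_singleton_self (b 0))
  · have hmem : ∀ w : Fin 3 → V, w 0 = b 0 → v ∈ span 𝕜 (Set.range w) := fun w hw =>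
      (span_singleton_le_iff_mem _ _).2 (subset_span (Set.mem_range.2 ⟨0, hw⟩)) hv
    simp only [twoPlaneForm, mul_add, mul_smul_comm]
    rw [ι_mul_ιMulti_eq_zero_of_mem_span _ (hmem _ rfl),
      ι_mul_ιMulti_eq_zero_of_mem_span _ (hmem _ rfl), smul_zero, smul_zero, add_zero]

theorem twoPlaneForm_ne_zero (hA : A ≠ 0) (hB : B ≠ 0) : twoPlaneForm b A B ≠ 0 := fun h => by
  have := (ι_mul_twoPlaneForm_eq_zero_iff b hA hB (b 5)).1 (by rw [h, mul_zero])
  obtain ⟨α, hα⟩ := mem_span_singleton.1 this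
  simpa using congrArg (fun x => b.repr x 5) hα

theorem map_twoPlaneForm_eq_zero_iff (hA : A ≠ 0) (hB : B ≠ 0) (f : Dual 𝕜 V)
    (c : ExteriorAlgebra 𝕜 V →ₗ[𝕜] ExteriorAlgebra 𝕜 V)
    (hc : ∀ x y z : V, c (ι 𝕜 x * ι 𝕜 y * ι 𝕜 z) =
      f x • (ι 𝕜 y * ι 𝕜 z) - f y • (ι 𝕜 x * ι 𝕜 z) + f z • (ι 𝕜 x * ι 𝕜 y)) :
    c (twoPlaneForm b A B) = 0 ↔ ∀ i : Fin 5, f (b i.castSucc) = 0 := by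
  refine ⟨fun h => ?_, fun h => ?_⟩
  · have hcoeff : ∀ s : Fin 2 → Fin 6, detPairing (b.coord ∘ s) (c (twoPlaneForm b A B)) = 0 :=
      fun s => by rw [h, map_zero]
    simp only [twoPlaneForm, ιMulti_three, map_add, map_smul, hc] at hcoeff
    have h0 := hcoeff ![1, 2]
    have h1 := hcoeff ![0, 2]
    have h2 := hcoeff ![0, 1]
    have h3 := hcoeff ![0, 4]
    have h4 := hcoeff ![0, 3]
    simp [detPairing_ι_mul_ι, hA, hB] at h0 h1 h2 h3 h4
    intro i
    fin_cases i <;> assumption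
  · have h0 : f (b 0) = 0 := h 0
    have h1 : f (b 1) = 0 := h 1
    have h2 : f (b 2) = 0 := h 2
    have h3 : f (b 3) = 0 := h 3
    have h4 : f (b 4) = 0 := h 4
    simp only [twoPlaneForm, ιMulti_three, map_add, map_smul, hc]
    simp [h0, h1, h2, h3, h4]

end TwoPlaneForm

end Field

theorem stmt18 {V : Type*} [AddCommGroup V] [Module ℂ V] [FiniteDimensional ℂ V]
    (hV : Module.finrank ℂ V = 6)
    (K : Module.Dual ℂ V →ₗ[ℂ] ExteriorAlgebra ℂ V →ₗ[ℂ] ExteriorAlgebra ℂ V)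
    (hK : ∀ (f : Module.Dual ℂ V) (x y z : V),
      K f (ι ℂ x * ι ℂ y * ι ℂ z) =
        f x • (ι ℂ y * ι ℂ z) - f y • (ι ℂ x * ι ℂ z) + f z • (ι ℂ x * ι ℂ y))
    (Λ Λ' : Submodule ℂ V)
    (hΛ : Module.finrank ℂ Λ = 3) (hΛ' : Module.finrank ℂ Λ' = 3)
    (hint : Module.finrank ℂ ↥(Λ ⊓ Λ') = 1)
    (u u' : ExteriorAlgebra ℂ V)
    (hu : IsPluckerVector 3 Λ u) (hu' : IsPluckerVector 3 Λ' u') :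
    ∀ a b : ℂ, a ≠ 0 → b ≠ 0 →
      (¬ ∃ x y z : V, a • u + b • u' = ι ℂ x * ι ℂ y * ι ℂ z) ∧
      (∀ v : V, ι ℂ v * (a • u + b • u') = 0 ↔ v ∈ Λ ⊓ Λ') ∧
      Module.finrank ℂ ↥(Λ ⊔ Λ') = 5 ∧
      (∃ f : Module.Dual ℂ V, f ≠ 0 ∧ K f (a • u + b • u') = 0) ∧
      (∀ f : Module.Dual ℂ V, f ≠ 0 → K f (a • u + b • u') = 0 →
        LinearMap.ker f = Λ ⊔ Λ') := by
  intro a b ha hb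
  obtain ⟨v, hv, rfl⟩ := hu
  obtain ⟨v', hv', rfl⟩ := hu'
  have hsup : finrank ℂ ↥(Λ ⊔ Λ') = 5 := by
    have := finrank_sup_add_finrank_inf_eq Λ Λ'
    omega
  obtain ⟨e, c, c', hc, hc', hline, hspan, hve, hve'⟩ :=
    exists_basis_adapted_to_planes hV hsup hint hv hv'
  have hA : a * c ≠ 0 := mul_ne_zero ha hc
  have hB : b * c' ≠ 0 := mul_ne_zero hb hc'
  have hω : a • ιMulti ℂ 3 v + b • ιMulti ℂ 3 v' = twoPlaneForm e (a * c) (b * c') := by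
    rw [hve, hve', twoPlaneForm, smul_smul, smul_smul]
  have hker := ι_mul_twoPlaneForm_eq_zero_iff e hA hB
  have hcontr f := map_twoPlaneForm_eq_zero_iff e hA hB f (K f) (hK f)
  rw [hω, hline]
  refine ⟨not_exists_eq_ι_mul_ι_mul_ι (twoPlaneForm_ne_zero e hA hB) fun x => (hker x).1,
    hker, hsup, ⟨e.coord (Fin.last 5), fun h => ?_, (hcontr _).2 fun i => ?_⟩, fun f hf hKf => ?_⟩
  · simpa using LinearMap.congr_fun h (e (Fin.last 5))
  · simpa [Finsupp.single_apply] using (Fin.castSucc_lt_last i).ne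
  · refine ker_eq_of_le_ker_of_finrank_add_one hf ?_ (by rw [hsup, hV])
    rw [← hspan, span_le, Set.range_subset_iff]
    exact (hcontr f).1 hKf
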